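/- The descriptors in Diff({d1},{d2}) are pairwise mutually exclusive: for any two distinct descriptors e, e' in Diff({d1},{d2}), ω(e) ∩ ω(e') = ∅. -/

import Mathlib

def WSExtends {V α : Type} (Dom : V → Finset α) (f : V → α) (d : V → Option α) : Prop :=
  (∀ x, f x ∈ Dom x) ∧ ∀ x a, d x = some a → f x = a

def omegaD {V α : Type} (Dom : V → Finset α) (d : V → Option α) : Set (V → α) :=
  {f | WSExtends Dom f d}

def DiffSet {V α : Type} [DecidableEq V] [DecidableEq α]
    (Dom : V → Finset α) (d1 d2 : V → Option α) (xs : List V) : Set (V → Option α) :=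
  { e | ∃ i : Fin xs.length, ∃ w' ∈ Dom (xs.get i),
      d2 (xs.get i) ≠ some w' ∧
      e = fun y => if y = xs.get i then some w'
            else if y ∈ xs.take i.val then d2 y else d1 y }

/-
Two worlds extending descriptors that assign different values to a common variable cannot
coincide. The `i`-th descriptor of `Diff` fixes `x_i` to a value `w ≠ d2 x_i`, while the `j`-th
one, for `i < j`, copies `d2` on `x_1, …, x_{j-1}`, hence fixes `x_i` to `d2 x_i`; and two
descriptors with the same index but different values already clash at `x_i`.
-/

section

variable {V α : Type}

theorem omegaD_inter_eq_empty_of_clash (Dom : V → Finset α) {d d' : V → Option α} {x : V}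
    {a b : α} (ha : d x = some a) (hb : d' x = some b) (hab : a ≠ b) :
    omegaD Dom d ∩ omegaD Dom d' = ∅ := by
  rw [Set.eq_empty_iff_forall_notMem]
  rintro f ⟨⟨-, hf⟩, ⟨-, hf'⟩⟩
  exact hab ((hf x a ha).symm.trans (hf' x b hb))

variable [DecidableEq V]

def diffDescriptor (d1 d2 : V → Option α) (xs : List V) (i : Fin xs.length) (w : α) :
    V → Option α :=
  fun y => if y = xs.get i then some w else if y ∈ xs.take i.val then d2 y else d1 y

theorem diffDescriptor_apply_self (d1 d2 : V → Option α) (xs : List V) (i : Fin xs.length)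
    (w : α) : diffDescriptor d1 d2 xs i w (xs.get i) = some w := by
  simp [diffDescriptor]

theorem diffDescriptor_apply_of_lt (d1 d2 : V → Option α) {xs : List V} (hnd : xs.Nodup)
    {i j : Fin xs.length} (hij : i < j) (w : α) :
    diffDescriptor d1 d2 xs j w (xs.get i) = d2 (xs.get i) := by
  have hne : xs.get i ≠ xs.get j := fun h => hij.ne (hnd.get_inj_iff.mp h)
  have hmem : xs.get i ∈ xs.take j.val := by
    rw [List.mem_take_iff_getElem]
    exact ⟨i.val, by simp [hij], rfl⟩
  simp only [diffDescriptor, if_neg hne, if_pos hmem]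

theorem mem_diffSet_iff [DecidableEq α] {Dom : V → Finset α} {d1 d2 : V → Option α}
    {xs : List V} {e : V → Option α} :
    e ∈ DiffSet Dom d1 d2 xs ↔ ∃ i : Fin xs.length, ∃ w ∈ Dom (xs.get i),
      d2 (xs.get i) ≠ some w ∧ e = diffDescriptor d1 d2 xs i w :=
  Iff.rfl

end

theorem stmt7_general {V α : Type} [DecidableEq V] [DecidableEq α]
    (Dom : V → Finset α)
    (d1 d2 : V → Option α)
    (xs : List V) (hnd : xs.Nodup)
    (hxs : ∀ y, y ∈ xs ↔ (d1 y = none ∧ d2 y ≠ none)) :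
    ∀ e ∈ DiffSet Dom d1 d2 xs, ∀ e' ∈ DiffSet Dom d1 d2 xs,
      e ≠ e' → omegaD Dom e ∩ omegaD Dom e' = ∅ := by
  have clash_of_lt : ∀ {i j : Fin xs.length} (w w' : α), i < j → d2 (xs.get i) ≠ some w →
      omegaD Dom (diffDescriptor d1 d2 xs i w) ∩ omegaD Dom (diffDescriptor d1 d2 xs j w') = ∅ := by
    intro i j w w' hij hw
    obtain ⟨b, hb⟩ := Option.ne_none_iff_exists'.mp ((hxs _).mp (xs.get_mem i)).2
    refine omegaD_inter_eq_empty_of_clash Dom (diffDescriptor_apply_self d1 d2 xs i w)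
      ((diffDescriptor_apply_of_lt d1 d2 hnd hij w').trans hb) ?_
    rintro rfl
    exact hw hb
  simp only [mem_diffSet_iff]
  rintro e ⟨i, w, -, hw, rfl⟩ e' ⟨j, w', -, hw', rfl⟩ hne
  rcases lt_trichotomy i j with hij | rfl | hji
  · exact clash_of_lt w w' hij hw
  · exact omegaD_inter_eq_empty_of_clash Dom (diffDescriptor_apply_self d1 d2 xs i w)
      (diffDescriptor_apply_self d1 d2 xs i w') fun h => hne (h ▸ rfl)
  · rw [Set.inter_comm]
    exact clash_of_lt w' w hji hw'

/-- The descriptors in Diff({d1},{d2}) are pairwise mutually exclusive. -/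
theorem stmt7 {V α : Type} [DecidableEq V] [DecidableEq α]
    (Dom : V → Finset α)
    (d1 d2 : V → Option α)
    (hcons : ∀ x a b, d1 x = some a → d2 x = some b → a = b)
    (xs : List V) (hnd : xs.Nodup)
    (hxs : ∀ y, y ∈ xs ↔ (d1 y = none ∧ d2 y ≠ none)) :
    ∀ e ∈ DiffSet Dom d1 d2 xs, ∀ e' ∈ DiffSet Dom d1 d2 xs,
      e ≠ e' → omegaD Dom e ∩ omegaD Dom e' = ∅ :=
  stmt7_general Dom d1 d2 xs hnd hxs
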